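/- arXiv:1803.08034 — 3 statements merged into one kernel-verified Lean document; each statement's English description precedes it below -/
import Mathlib

section
/- The map sending a word w over {x, x̄} to the triple (-λ(w), ν(w), μ(w)) is a monoid homomorphism from the free monoid {x,x̄}* to the set of triples {(-l,n,m) : l,n ∈ ℕ, -l ≤ m ≤ n} equipped with the multiplication (-l,n,m)·(-l',n',m') = (min(-l, m-l'), max(n, m+n'), m+m') and identity (0,0,0). -/
/-- Step of a letter: `true` = x (+1), `false` = x̄ (-1). -/
def step (b : Bool) : ℤ := if b then 1 else -1

/-- μ(w): endpoint of the path traced by `w` starting at 0. -/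
def mu (w : List Bool) : ℤ := (w.map step).sum

/-- ν(w): maximum position visited (max of μ over prefixes). -/
def nu (w : List Bool) : ℤ := (w.inits.map mu).foldr max 0

/-- λ(w): negative of the minimum position visited. -/
def lam (w : List Bool) : ℤ := -((w.inits.map mu).foldr min 0)

/-- The formal inverse word: reverse and swap x ↔ x̄. -/
def winv (w : List Bool) : List Bool := w.reverse.map (fun b => !b)

/-- Multiplication of triples (-l, n, m). -/
def mulT (p q : ℤ × ℤ × ℤ) : ℤ × ℤ × ℤ :=
  (min p.1 (p.2.2 + q.1), max p.2.1 (p.2.2 + q.2.1), p.2.2 + q.2.2)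

/-- Membership in the triple model T = {(-l,n,m) : l,n ≥ 0, -l ≤ m ≤ n}. -/
def inT (p : ℤ × ℤ × ℤ) : Prop := p.1 ≤ 0 ∧ 0 ≤ p.2.1 ∧ p.1 ≤ p.2.2 ∧ p.2.2 ≤ p.2.1

/-- The map w ↦ (-λ(w), ν(w), μ(w)). -/
def tripleOf (w : List Bool) : ℤ × ℤ × ℤ := (-lam w, nu w, mu w)
-- auxiliary lemmas

lemma mu_nil : mu [] = 0 := rfl

lemma mu_cons (b : Bool) (w : List Bool) : mu (b :: w) = step b + mu w := by
  simp [mu]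

lemma mu_append (u v : List Bool) : mu (u ++ v) = mu u + mu v := by
  simp [mu]

/-- the minimum function ρ = -λ. -/
def rho (w : List Bool) : ℤ := (w.inits.map mu).foldr min 0

lemma neg_lam (w : List Bool) : -lam w = rho w := by
  simp [lam, rho]

lemma foldr_max_map_add (c : ℤ) : ∀ (L : List ℤ) (b : ℤ),
    (L.map (c + ·)).foldr max (c + b) = c + L.foldr max b := by
  intro L
  induction L with
  | nil => intro b; simp
  | cons x L ih => intro b; simp only [List.map_cons, List.foldr_cons, ih]; omega

lemma foldr_min_map_add (c : ℤ) : ∀ (L : List ℤ) (b : ℤ),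
    (L.map (c + ·)).foldr min (c + b) = c + L.foldr min b := by
  intro L
  induction L with
  | nil => intro b; simp
  | cons x L ih => intro b; simp only [List.map_cons, List.foldr_cons, ih]; omega

lemma foldr_max_comm (b b' : ℤ) : ∀ (L : List ℤ),
    max b' (L.foldr max b) = max b (L.foldr max b') := by
  intro L
  induction L with
  | nil => simp; omega
  | cons x L ih => simp only [List.foldr_cons]; omega

lemma foldr_min_comm (b b' : ℤ) : ∀ (L : List ℤ),
    min b' (L.foldr min b) = min b (L.foldr min b') := by
  intro L
  induction L with
  | nil => simp; omega
  | cons x L ih => simp only [List.foldr_cons]; omega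

lemma foldr_max_inits_nonneg (w : List Bool) (b : ℤ) :
    0 ≤ (w.inits.map mu).foldr max b := by
  cases w with
  | nil => simp [List.inits, mu]
  | cons a l => simp only [List.inits_cons, List.map_cons, List.foldr_cons, mu_nil]; omega

lemma foldr_min_inits_nonpos (w : List Bool) (b : ℤ) :
    (w.inits.map mu).foldr min b ≤ 0 := by
  cases w with
  | nil => simp [List.inits, mu]
  | cons a l => simp only [List.inits_cons, List.map_cons, List.foldr_cons, mu_nil]; omega

lemma nu_cons (b : Bool) (w : List Bool) : nu (b :: w) = max 0 (step b + nu w) := by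
  have hmap : (w.inits.map fun t => mu (b :: t)) = (w.inits.map mu).map (step b + ·) := by
    simp [List.map_map, Function.comp, mu_cons]
  have h1 : ((w.inits.map mu).map (step b + ·)).foldr max (step b + (-step b)) =
      step b + (w.inits.map mu).foldr max (-step b) := foldr_max_map_add _ _ _
  have h2 : max 0 ((w.inits.map mu).foldr max (-step b)) =
      max (-step b) ((w.inits.map mu).foldr max 0) := foldr_max_comm _ _ _
  have h3 := foldr_max_inits_nonneg w (-step b)
  have h4 := foldr_max_inits_nonneg w (0 : ℤ)
  simp only [nu, List.inits_cons, List.map_cons, List.foldr_cons, List.map_map, mu_nil]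
  have : (List.map (mu ∘ fun t => b :: t) w.inits) = (w.inits.map mu).map (step b + ·) := by
    simp [List.map_map, Function.comp, mu_cons]
  rw [this]
  have h5 : step b + (-step b) = 0 := by omega
  rw [h5] at h1
  rw [h1]
  omega

lemma rho_cons (b : Bool) (w : List Bool) : rho (b :: w) = min 0 (step b + rho w) := by
  have h1 : ((w.inits.map mu).map (step b + ·)).foldr min (step b + (-step b)) =
      step b + (w.inits.map mu).foldr min (-step b) := foldr_min_map_add _ _ _
  have h2 : min 0 ((w.inits.map mu).foldr min (-step b)) =
      min (-step b) ((w.inits.map mu).foldr min 0) := foldr_min_comm _ _ _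
  have h3 := foldr_min_inits_nonpos w (-step b)
  have h4 := foldr_min_inits_nonpos w (0 : ℤ)
  simp only [rho, List.inits_cons, List.map_cons, List.foldr_cons, List.map_map, mu_nil]
  have : (List.map (mu ∘ fun t => b :: t) w.inits) = (w.inits.map mu).map (step b + ·) := by
    simp [List.map_map, Function.comp, mu_cons]
  rw [this]
  have h5 : step b + (-step b) = 0 := by omega
  rw [h5] at h1
  rw [h1]
  omega

lemma nu_nil : nu [] = 0 := by simp [nu, List.inits, mu]
lemma rho_nil : rho [] = 0 := by simp [rho, List.inits, mu]

lemma nu_nonneg (w : List Bool) : 0 ≤ nu w := foldr_max_inits_nonneg w 0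
lemma rho_nonpos (w : List Bool) : rho w ≤ 0 := foldr_min_inits_nonpos w 0

lemma mu_le_nu (w : List Bool) : mu w ≤ nu w := by
  induction w with
  | nil => simp [mu_nil, nu_nil]
  | cons b w ih => rw [mu_cons, nu_cons]; omega

lemma rho_le_mu (w : List Bool) : rho w ≤ mu w := by
  induction w with
  | nil => simp [mu_nil, rho_nil]
  | cons b w ih => rw [mu_cons, rho_cons]; omega

lemma nu_append (u v : List Bool) : nu (u ++ v) = max (nu u) (mu u + nu v) := by
  induction u with
  | nil =>
    have := nu_nonneg v
    simp [nu_nil, mu_nil]; omega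
  | cons b u ih =>
    simp only [List.cons_append, nu_cons, mu_cons, ih]; omega

lemma rho_append (u v : List Bool) : rho (u ++ v) = min (rho u) (mu u + rho v) := by
  induction u with
  | nil =>
    have := rho_nonpos v
    simp [rho_nil, mu_nil]; omega
  | cons b u ih =>
    simp only [List.cons_append, rho_cons, mu_cons, ih]; omega

/-- w ↦ (-λ(w), ν(w), μ(w)) is a monoid homomorphism from {x,x̄}* to T. -/
theorem stmt1 :
    (∀ w : List Bool, inT (tripleOf w)) ∧
    tripleOf [] = (0, 0, 0) ∧
    (∀ u v : List Bool, tripleOf (u ++ v) = mulT (tripleOf u) (tripleOf v)) := by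
  refine ⟨?_, ?_, ?_⟩
  · intro w
    have h1 := nu_nonneg w
    have h2 := rho_nonpos w
    have h3 := mu_le_nu w
    have h4 := rho_le_mu w
    simp only [inT, tripleOf, neg_lam w]
    exact ⟨h2, h1, h4, h3⟩
  · simp [tripleOf, nu_nil, mu_nil, lam, List.inits]
  · intro u v
    simp only [tripleOf, mulT, neg_lam, nu_append, rho_append, mu_append]
end

section
/- In the monoid of triples T = {(-l,n,m) : l,n ∈ ℕ, -l ≤ m ≤ n} with multiplication (-l,n,m)·(-l',n',m') = (min(-l, m-l'), max(n, m+n'), m+m'), every element (-l,n,m) has a unique element y satisfying x y x = x and y x y = y, namely y = (-(l+m), n-m, -m). Hence T is an inverse monoid. -/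
/-- The inverse of (-l,n,m) is (-(l+m), n-m, -m). -/
def invT (p : ℤ × ℤ × ℤ) : ℤ × ℤ × ℤ := (p.1 - p.2.2, p.2.1 - p.2.2, -p.2.2)

/-- In T every element has a unique inverse, namely `invT p`; hence T is an
inverse monoid. -/
theorem stmt3 (p : ℤ × ℤ × ℤ) (hp : inT p) :
    inT (invT p) ∧
    mulT (mulT p (invT p)) p = p ∧
    mulT (mulT (invT p) p) (invT p) = invT p ∧
    (∀ y : ℤ × ℤ × ℤ, inT y → mulT (mulT p y) p = p →
      mulT (mulT y p) y = y → y = invT p) := by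
  obtain ⟨a, b, c⟩ := p
  obtain ⟨h1, h2, h3, h4⟩ := hp
  simp only [inT, invT, mulT] at *
  refine ⟨⟨by omega, by omega, by omega, by omega⟩, ?_, ?_, ?_⟩
  · ext <;> simp
  · ext <;> simp
  · rintro ⟨x, y, z⟩ ⟨g1, g2, g3, g4⟩ e1 e2
    simp only [Prod.mk.injEq] at e1 e2 ⊢
    obtain ⟨e1a, e1b, e1c⟩ := e1
    obtain ⟨e2a, e2b, e2c⟩ := e2
    simp only at *
    omega
end

section
/- T satisfies the defining identities of inverse monoids: for all s ∈ T, s·s⁻¹·s = s and s⁻¹·s·s⁻¹ = s⁻¹, and for all s, t ∈ T, (s·s⁻¹)·(t·t⁻¹) = (t·t⁻¹)·(s·s⁻¹), where T is the triple model of FIM_1 and (-l,n,m)⁻¹ = (-(l+m), n-m, -m). -/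
/-- T satisfies the defining identities of inverse monoids: every element is
regular via its inverse, and the idempotents s·s⁻¹ commute. -/
theorem stmt19 :
    (∀ p : ℤ × ℤ × ℤ, inT p →
      mulT (mulT p (invT p)) p = p ∧ mulT (mulT (invT p) p) (invT p) = invT p) ∧
    (∀ p q : ℤ × ℤ × ℤ, inT p → inT q →
      mulT (mulT p (invT p)) (mulT q (invT q)) =
        mulT (mulT q (invT q)) (mulT p (invT p))) := by
  constructor
  · rintro ⟨a, b, c⟩ ⟨h1, h2, h3, h4⟩
    simp only [mulT, invT, inT, Prod.mk.injEq] at *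
    constructor <;> refine ⟨?_, ?_, ?_⟩ <;> omega
  · rintro ⟨a, b, c⟩ ⟨d, e, f⟩ ⟨h1, h2, h3, h4⟩ ⟨h5, h6, h7, h8⟩
    simp only [mulT, invT, inT, Prod.mk.injEq] at *
    refine ⟨?_, ?_, ?_⟩ <;> omega
end
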